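/- Let S be a finite connected poset. The following are equivalent: (A) for every generator L on S, if the transition semigroup P_t = exp(tL) is stochastically monotone then L admits a monotone representation; (B) every stochastically weakly monotone system (P_x)_{x∈S} of probability measures on S indexed by S itself is realizably weakly monotone. -/

import Mathlib

open Finset

section CoreDefs

/-- The Hasse diagram of a poset, as a simple graph: edges are covering pairs. -/
def hasse (S : Type*) [PartialOrder S] : SimpleGraph S where
  Adj x y := x ⋖ y ∨ y ⋖ x
  symm := ⟨fun _ _ h => Or.symm h⟩
  loopless := ⟨fun x h => lt_irrefl x (h.elim CovBy.lt CovBy.lt)⟩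

/-- A poset is acyclic if its Hasse diagram is a forest. -/
def PosetAcyclic (S : Type*) [PartialOrder S] : Prop := (hasse S).IsAcyclic

/-- A poset is connected if its Hasse diagram is connected. -/
def PosetConnected (S : Type*) [PartialOrder S] : Prop := (hasse S).Connected

variable {S A : Type*}

/-- `P ⪯ Q` : stochastic domination, `P U ≤ Q U` for every up-set `U`. -/
def StochLE [PartialOrder S] [Fintype S] (P Q : S → ℝ) : Prop :=
  ∀ U : Finset S, IsUpperSet (U : Set S) → ∑ x ∈ U, P x ≤ ∑ x ∈ U, Q x

/-- A system of nonnegative measures on `S` with common total mass `p`. -/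
def IsMeasureSystem [Fintype S] (P : A → S → ℝ) (p : ℝ) : Prop :=
  (∀ α x, 0 ≤ P α x) ∧ ∀ α, ∑ x, P α x = p

/-- A system indexed by a poset is stochastically monotone if it is
compatible with the stochastic ordering. -/
def StochMonoSystem [PartialOrder A] [PartialOrder S] [Fintype S] (P : A → S → ℝ) : Prop :=
  ∀ α β : A, α ≤ β → StochLE (P α) (P β)

/-- A system is realizably monotone if it is the system of marginals of a
nonnegative weight supported on monotone maps from `A` to `S`. -/
def RealizablyMono [PartialOrder A] [PartialOrder S] [Fintype A] [Fintype S]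
    [DecidableEq A] [DecidableEq S] (P : A → S → ℝ) : Prop :=
  ∃ μ : (A → S) → ℝ, (∀ h, 0 ≤ μ h) ∧ (∀ h, μ h ≠ 0 → Monotone h) ∧
    ∀ (α : A) (x : S), ∑ h ∈ univ.filter (fun h : A → S => h α = x), μ h = P α x

/-- The unit point mass at `x`. -/
def pointMass [DecidableEq S] (x : S) : S → ℝ := fun y => if y = x then 1 else 0

end CoreDefs
section GenDefs

variable {S : Type*} [Fintype S] [DecidableEq S]

/-- A generator (Q-matrix) on a finite set. -/
def IsGenerator (L : Matrix S S ℝ) : Prop :=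
  (∀ x y : S, x ≠ y → 0 ≤ L x y) ∧ ∀ x : S, ∑ y : S, L x y = 0

/-- The transition semigroup `P_t = exp (t L)`. -/
noncomputable def transP (L : Matrix S S ℝ) (t : ℝ) : Matrix S S ℝ :=
  NormedSpace.exp (t • L)

/-- The transition semigroup is stochastically monotone. -/
def SemigroupStochMono [PartialOrder S] (L : Matrix S S ℝ) : Prop :=
  ∀ t : ℝ, 0 ≤ t → ∀ x y : S, x ≤ y → StochLE (transP L t x) (transP L t y)

/-- `L` admits a monotone representation: `L x y = ∑ γ h` over monotone
non-identity maps `h` with `h x = y`, for `x ≠ y`. -/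
def MonotoneRep [PartialOrder S] (L : Matrix S S ℝ) : Prop :=
  ∃ γ : (S → S) → ℝ, (∀ h, 0 ≤ γ h) ∧ (∀ h, γ h ≠ 0 → Monotone h ∧ h ≠ id) ∧
    ∀ x y : S, x ≠ y → L x y = ∑ h ∈ Finset.univ.filter (fun h : S → S => h x = y), γ h

end GenDefs

/-!
Forward direction: if `M = θ P + (1 - θ) I` is stochastically monotone, then `M - I` is a
generator whose semigroup `e^{-t} e^{t M} = e^{-t} ∑ tⁿ/n! Mⁿ` is a positive combination of the
stochastically monotone powers `Mⁿ`. A monotone representation `γ` of `M - I`, scaled by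
`ε = 1/(1 + ∑ γ)` and completed by the mass `ε` on the identity map, realizes `ε M + (1 - ε) I`.

Backward direction: each `P_t` is stochastically monotone, hence realizably weakly monotone,
which gives a monotone representation of `P_t / t`. Its weights are bounded by the off-diagonal
mass of `P_t / t`, which converges to that of `L`, so by compactness a subsequence of the
weights converges to a monotone representation of `L = lim (P_t - I) / t`.
-/

section StochasticOrder

variable {S : Type*} [PartialOrder S] [Fintype S]

theorem StochLE.sum_mul_le_sum_mul {P Q : S → ℝ} (hPQ : StochLE P Q) {f : S → ℝ}
    (hf : Monotone f) (hf0 : 0 ≤ f) : ∑ z, P z * f z ≤ ∑ z, Q z * f z := by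
  induction hn : #{z | 0 < f z} using Nat.strong_induction_on generalizing f with
  | _ n ih =>
  set U : Finset S := {z | 0 < f z} with hU
  rcases U.eq_empty_or_nonempty with hUe | hUne
  · have hf_eq : ∀ z, f z = 0 := fun z =>
      le_antisymm (not_lt.mp (filter_eq_empty_iff.mp hUe (mem_univ z))) (hf0 z)
    simp [hf_eq]
  -- Peel off the lowest positive layer `f z₀ • 1_U` of `f`; what remains has smaller support.
  obtain ⟨z₀, hz₀, hz₀_min⟩ := U.exists_min_image f hUne
  have hc : 0 < f z₀ := (mem_filter.mp hz₀).2
  have hmin : ∀ z, 0 < f z → f z₀ ≤ f z := fun z hz => hz₀_min z (by simpa [hU] using hz)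
  set g : S → ℝ := fun z => if 0 < f z then f z - f z₀ else 0
  have hUup : IsUpperSet (U : Set S) := fun a b hab ha => by
    simp only [hU, coe_filter, mem_univ, true_and, Set.mem_ofPred_eq] at ha ⊢
    exact ha.trans_le (hf hab)
  have hg0 : 0 ≤ g := fun z => by
    dsimp only [g]
    split_ifs with hz
    exacts [sub_nonneg.mpr (hmin z hz), le_rfl]
  have hg : Monotone g := fun a b hab => by
    dsimp only [g]
    split_ifs with ha hb hb
    exacts [sub_le_sub_right (hf hab) _, absurd (ha.trans_le (hf hab)) hb,
      sub_nonneg.mpr (hmin b hb), le_rfl]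
  have hsupp : #{z | 0 < g z} < n := by
    refine hn ▸ card_lt_card ⟨fun z hz => ?_, fun hsub => ?_⟩
    · simp only [g, mem_filter, mem_univ, true_and] at hz ⊢
      split_ifs at hz with h <;> simp_all
    · have := (mem_filter.mp (hsub hz₀)).2
      simp [g] at this
  have hsplit : ∀ R : S → ℝ, ∑ z, R z * f z = ∑ z, R z * g z + f z₀ * ∑ z ∈ U, R z := by
    intro R
    rw [hU, sum_filter, mul_sum, ← sum_add_distrib]
    refine sum_congr rfl fun z _ => ?_
    dsimp only [g]
    split_ifs with h
    · ring
    · rw [le_antisymm (not_lt.mp h) (hf0 z)]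
      ring
  rw [hsplit P, hsplit Q]
  exact add_le_add (ih _ hsupp hg hg0 rfl) (mul_le_mul_of_nonneg_left (hPQ U hUup) hc.le)

theorem StochMonoSystem.mul {M N : Matrix S S ℝ} (hM : StochMonoSystem M)
    (hN : StochMonoSystem N) (hN0 : ∀ x z, 0 ≤ N x z) : StochMonoSystem (M * N) := by
  intro x y hxy U hU
  have hrow : ∀ w, ∑ z ∈ U, (M * N) w z = ∑ v, M w v * ∑ z ∈ U, N v z := fun w => by
    simp only [Matrix.mul_apply, mul_sum]
    exact sum_comm
  rw [hrow, hrow]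
  exact hM x y hxy |>.sum_mul_le_sum_mul (fun a b hab => hN a b hab U hU)
    fun v => sum_nonneg fun z _ => hN0 v z

theorem StochMonoSystem.smul {M : Matrix S S ℝ} (hM : StochMonoSystem M) {c : ℝ} (hc : 0 ≤ c) :
    StochMonoSystem (c • M) := fun x y hxy U hU => by
  simpa only [Matrix.smul_apply, smul_eq_mul, ← mul_sum] using
    mul_le_mul_of_nonneg_left (hM x y hxy U hU) hc

theorem StochMonoSystem.of_hasSum {M : ℕ → Matrix S S ℝ} {N : Matrix S S ℝ} (hMN : HasSum M N)
    (hM : ∀ n, StochMonoSystem (M n)) : StochMonoSystem N := by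
  intro x y hxy U hU
  have hrow : ∀ w, HasSum (fun n => ∑ z ∈ U, M n w z) (∑ z ∈ U, N w z) := fun w =>
    hasSum_sum fun z _ => Pi.hasSum.mp (Pi.hasSum.mp hMN w) z
  exact hasSum_le (fun n => hM n x y hxy U hU) (hrow x) (hrow y)

variable [DecidableEq S]

theorem StochMonoSystem.one : StochMonoSystem (1 : Matrix S S ℝ) := by
  intro x y hxy U hU
  simp only [Matrix.one_apply, sum_ite_eq]
  by_cases hx : x ∈ U
  · simp [hx, mem_coe.mp (hU hxy hx)]
  · simp only [hx, if_false]
    split_ifs <;> norm_num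

theorem StochMonoSystem.pow {M : Matrix S S ℝ} (hM : StochMonoSystem M) (hM0 : ∀ x z, 0 ≤ M x z)
    (n : ℕ) : StochMonoSystem (M ^ n) := by
  induction n with
  | zero => simpa using StochMonoSystem.one
  | succ n ih => simpa only [pow_succ] using ih.mul hM hM0

end StochasticOrder

section MatrixExp

open NormedSpace Filter Topology
open scoped Nat Matrix.Norms.Operator

variable {S : Type*} [Fintype S] [DecidableEq S]

theorem Matrix.exp_smul_one (c : ℝ) :
    exp (c • (1 : Matrix S S ℝ)) = Real.exp c • (1 : Matrix S S ℝ) := by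
  rw [Matrix.smul_one_eq_diagonal, Matrix.exp_diagonal, Matrix.smul_one_eq_diagonal,
    Real.exp_eq_exp_ℝ]
  exact congrArg Matrix.diagonal (Pi.exp_def _)

theorem transP_sub_smul_one (N : Matrix S S ℝ) (c t : ℝ) :
    transP (N - c • 1) t = Real.exp (-(t * c)) • transP N t := by
  have hcomm : Commute (t • N) ((-(t * c)) • (1 : Matrix S S ℝ)) :=
    ((Commute.one_right N).smul_left t).smul_right _
  rw [transP, transP, smul_sub, smul_smul, sub_eq_add_neg, ← neg_smul,
    Matrix.exp_add_of_commute _ _ hcomm, Matrix.exp_smul_one, Matrix.mul_smul, mul_one]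

theorem hasSum_exp_apply (A : Matrix S S ℝ) (x z : S) :
    HasSum (fun n => (n ! : ℝ)⁻¹ * (A ^ n) x z) (exp A x z) :=
  Pi.hasSum.mp (Pi.hasSum.mp (exp_series_hasSum_exp' (𝕂 := ℝ) A) x) z

theorem exp_apply_nonneg {A : Matrix S S ℝ} (hA : ∀ x z, 0 ≤ A x z) (x z : S) :
    0 ≤ exp A x z :=
  (hasSum_exp_apply A x z).nonneg fun n =>
    mul_nonneg (by positivity) (Matrix.pow_apply_nonneg hA n x z)

theorem hasDerivAt_transP_zero (L : Matrix S S ℝ) : HasDerivAt (transP L) L 0 := by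
  have h := hasDerivAt_exp_smul_const' (𝕂 := ℝ) L 0
  rw [zero_smul, exp_zero, mul_one] at h
  exact h

theorem tendsto_inv_mul_transP_apply (L : Matrix S S ℝ) {x z : S} (hxz : x ≠ z) :
    Tendsto (fun t => t⁻¹ * transP L t x z) (𝓝[>] 0) (𝓝 (L x z)) := by
  have h := (hasDerivAt_pi.mp (hasDerivAt_pi.mp (hasDerivAt_transP_zero L) x) z)
  simpa [transP, Matrix.one_apply_ne hxz] using h.tendsto_slope_zero_right

theorem sum_transP_apply {L : Matrix S S ℝ} (hL : ∀ x, ∑ z, L x z = 0) (t : ℝ) (x : S) :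
    ∑ z, transP L t x z = 1 := by
  have hpow : ∀ n x, ∑ z, ((t • L) ^ (n + 1)) x z = 0 := fun n x => by
    simp only [pow_succ, Matrix.mul_apply, Matrix.smul_apply, smul_eq_mul]
    rw [sum_comm]
    simp [← mul_sum, hL]
  have hsum := hasSum_sum (s := univ) fun z _ => hasSum_exp_apply (t • L) x z
  simp only [← mul_sum] at hsum
  have hsingle := hasSum_single (f := fun n => (n ! : ℝ)⁻¹ * ∑ z, ((t • L) ^ n) x z) 0
    fun n hn => by
      obtain ⟨k, rfl⟩ := Nat.exists_eq_succ_of_ne_zero hn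
      rw [hpow, mul_zero]
  simpa [transP, Matrix.one_apply] using hsum.unique hsingle

theorem IsGenerator.transP_nonneg {L : Matrix S S ℝ} (hL : IsGenerator L) {t : ℝ} (ht : 0 ≤ t)
    (x z : S) : 0 ≤ transP L t x z := by
  set c := ∑ w, |L w w|
  have hN : ∀ a b, 0 ≤ (t • (L + c • 1)) a b := fun a b => by
    refine mul_nonneg ht ?_
    rcases eq_or_ne a b with rfl | hab
    · have : |L a a| ≤ c := single_le_sum (fun w _ => abs_nonneg (L w w)) (mem_univ a)
      simp only [Matrix.add_apply, Matrix.smul_apply, Matrix.one_apply_eq, smul_eq_mul, mul_one]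
      linarith [neg_abs_le (L a a)]
    · simpa [Matrix.one_apply_ne hab] using hL.1 a b hab
  rw [show L = (L + c • 1) - c • 1 by abel, transP_sub_smul_one, Matrix.smul_apply, smul_eq_mul]
  exact mul_nonneg (Real.exp_pos _).le (exp_apply_nonneg hN x z)

theorem isGenerator_sub_one {M : Matrix S S ℝ} (hM0 : ∀ x z, 0 ≤ M x z)
    (hM1 : ∀ x, ∑ z, M x z = 1) : IsGenerator (M - 1) :=
  ⟨fun x z hxz => by simpa [Matrix.one_apply_ne hxz] using hM0 x z,
   fun x => by simp [sum_sub_distrib, hM1, Matrix.one_apply]⟩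

variable [PartialOrder S]

theorem StochMonoSystem.exp {M : Matrix S S ℝ} (hM : StochMonoSystem M)
    (hM0 : ∀ x z, 0 ≤ M x z) : StochMonoSystem (exp M : Matrix S S ℝ) :=
  .of_hasSum (exp_series_hasSum_exp' (𝕂 := ℝ) M) fun n => (hM.pow hM0 n).smul (by positivity)

theorem semigroupStochMono_sub_one {M : Matrix S S ℝ} (hM : StochMonoSystem M)
    (hM0 : ∀ x z, 0 ≤ M x z) : SemigroupStochMono (M - 1) := by
  intro t ht
  rw [← one_smul ℝ (1 : Matrix S S ℝ), transP_sub_smul_one]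
  exact ((hM.smul ht).exp fun x z => mul_nonneg ht (hM0 x z)).smul (Real.exp_pos _).le

end MatrixExp

section MonotoneRepresentation

open Filter Topology

variable {S : Type*} [Fintype S] [DecidableEq S]

theorem apply_eq_of_sum_eq_of_forall_ne {M : Type*} [AddCancelCommMonoid M] {f g : S → M}
    (hsum : ∑ z, f z = ∑ z, g z) {x : S} (hne : ∀ z, z ≠ x → f z = g z) : f x = g x := by
  rw [← add_sum_erase _ _ (mem_univ x), ← add_sum_erase _ _ (mem_univ x),
    sum_congr rfl fun z hz => hne z (ne_of_mem_erase hz)] at hsum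
  exact add_right_cancel hsum

theorem IsMeasureSystem.mix_pointMass {P : S → S → ℝ} (hP : IsMeasureSystem P 1) {θ : ℝ}
    (hθ0 : 0 ≤ θ) (hθ1 : θ ≤ 1) :
    IsMeasureSystem (fun x z => θ * P x z + (1 - θ) * pointMass x z) 1 := by
  refine ⟨fun x z => add_nonneg (mul_nonneg hθ0 (hP.1 x z)) (mul_nonneg (by linarith) ?_),
    fun x => ?_⟩
  · unfold pointMass
    split_ifs <;> norm_num
  · simp [sum_add_distrib, ← mul_sum, hP.2, pointMass]

variable [PartialOrder S]

theorem MonotoneRep.smul {L : Matrix S S ℝ} (hL : MonotoneRep L) {c : ℝ} (hc : 0 ≤ c) :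
    MonotoneRep (c • L) := by
  obtain ⟨γ, hγ0, hγ, hrep⟩ := hL
  refine ⟨c • γ, fun h => mul_nonneg hc (hγ0 h), fun h hh => hγ h (right_ne_zero_of_mul hh),
    fun x y hxy => ?_⟩
  simp [hrep x y hxy, mul_sum]

theorem RealizablyMono.monotoneRep {P : Matrix S S ℝ} {θ : ℝ} (hθ : 0 < θ)
    (hP : RealizablyMono fun x z => θ * P x z + (1 - θ) * pointMass x z) : MonotoneRep P := by
  obtain ⟨μ, hμ0, hμ, hmarg⟩ := hP
  refine ⟨fun h => if h = id then 0 else μ h / θ, fun h => ?_, fun h hh => ?_, fun x z hxz => ?_⟩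
  · dsimp only
    split_ifs
    exacts [le_rfl, div_nonneg (hμ0 h) hθ.le]
  · have hid : h ≠ id := fun hid => hh (if_pos hid)
    exact ⟨hμ h fun h0 => hh (by simp [hid, h0]), hid⟩
  · have hfib : ∀ h ∈ univ.filter (fun h : S → S => h x = z),
        (if h = id then 0 else μ h / θ) = μ h / θ := fun h hh =>
      if_neg (by rintro rfl; exact hxz (mem_filter.mp hh).2)
    rw [sum_congr rfl hfib, ← sum_div, hmarg]
    simp [pointMass, hxz.symm, hθ.ne']

theorem weight_le_sum_offDiag {L : Matrix S S ℝ} {γ : (S → S) → ℝ} (hγ0 : ∀ h, 0 ≤ γ h)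
    (hγ : ∀ h, γ h ≠ 0 → Monotone h ∧ h ≠ id)
    (hrep : ∀ x y, x ≠ y → L x y = ∑ h ∈ univ.filter (fun h : S → S => h x = y), γ h)
    (h : S → S) : γ h ≤ ∑ p ∈ univ.offDiag, L p.1 p.2 := by
  have hL0 : ∀ p ∈ univ.offDiag, 0 ≤ L p.1 p.2 := fun p hp => by
    rw [hrep _ _ (mem_offDiag.mp hp).2.2]
    exact sum_nonneg fun h _ => hγ0 h
  by_cases h0 : γ h = 0
  · exact h0 ▸ sum_nonneg hL0
  obtain ⟨x, hx⟩ := Function.ne_iff.mp (hγ h h0).2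
  calc γ h ≤ ∑ h' ∈ univ.filter (fun h' : S → S => h' x = h x), γ h' :=
        single_le_sum (fun h' _ => hγ0 h') (by simp)
    _ = L x (h x) := (hrep x (h x) (Ne.symm hx)).symm
    _ ≤ ∑ p ∈ univ.offDiag, L p.1 p.2 :=
        single_le_sum (f := fun p : S × S => L p.1 p.2) hL0 (a := (x, h x))
          (by simpa using Ne.symm hx)

theorem monotoneRep_of_tendsto {L : Matrix S S ℝ} {Ln : ℕ → Matrix S S ℝ}
    (hLn : ∀ n, MonotoneRep (Ln n))
    (hlim : ∀ x z, x ≠ z → Tendsto (fun n => Ln n x z) atTop (𝓝 (L x z))) : MonotoneRep L := by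
  choose γ hγ0 hγ hrep using hLn
  obtain ⟨B, hB⟩ : BddAbove (Set.range fun n => ∑ p ∈ univ.offDiag, Ln n p.1 p.2) :=
    (tendsto_finsetSum _ fun p hp => hlim p.1 p.2 (mem_offDiag.mp hp).2.2).bddAbove_range
  have hmem : ∀ n, γ n ∈ Set.Icc 0 fun _ => B := fun n =>
    ⟨hγ0 n, fun h => (weight_le_sum_offDiag (hγ0 n) (hγ n) (hrep n) h).trans (hB ⟨n, rfl⟩)⟩
  obtain ⟨γ', hγ'mem, φ, hφ, hγφ⟩ := isCompact_Icc.tendsto_subseq hmem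
  have hcoord : ∀ h, Tendsto (fun n => γ (φ n) h) atTop (𝓝 (γ' h)) := tendsto_pi_nhds.mp hγφ
  refine ⟨γ', hγ'mem.1, fun h hh => ?_, fun x z hxz => ?_⟩
  · by_contra hbad
    have hzero : ∀ n, γ (φ n) h = 0 := fun n => by_contra fun hne => hbad (hγ _ h hne)
    exact hh (tendsto_nhds_unique (hcoord h) (by simp [hzero]))
  · refine tendsto_nhds_unique ((hlim x z hxz).comp hφ.tendsto_atTop) ?_
    simpa only [Function.comp_def, hrep _ x z hxz] using tendsto_finsetSum _ fun h _ => hcoord h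

theorem MonotoneRep.exists_realizablyMono {M : Matrix S S ℝ} (hM1 : ∀ x, ∑ z, M x z = 1)
    (hrep : MonotoneRep (M - 1)) :
    ∃ ε, 0 < ε ∧ ε ≤ 1 ∧ RealizablyMono fun x z => ε * M x z + (1 - ε) * pointMass x z := by
  obtain ⟨γ, hγ0, hγ, hrep⟩ := hrep
  set C := ∑ h, γ h with hCdef
  have hC : 0 ≤ C := sum_nonneg fun h _ => hγ0 h
  set ε := (1 + C)⁻¹
  have hε : 0 < ε := by positivity
  have hεC : ε * C = 1 - ε := by
    simp only [ε]
    field_simp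
    ring
  set μ : (S → S) → ℝ := fun h => ε * (γ h + if h = id then 1 else 0)
  have hoff : ∀ x z, x ≠ z →
      ∑ h ∈ univ.filter (fun h : S → S => h x = z), μ h = ε * M x z + (1 - ε) * pointMass x z := by
    intro x z hxz
    have hfib := hrep x z hxz
    simp only [Matrix.sub_apply, Matrix.one_apply_ne hxz, sub_zero] at hfib
    simp [μ, ← mul_sum, sum_add_distrib, ← hfib, pointMass, hxz, hxz.symm]
  have hrow : ∀ x, ∑ z, ∑ h ∈ univ.filter (fun h : S → S => h x = z), μ h = 1 := by
    intro x
    rw [sum_fiberwise]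
    simp only [μ, ← mul_sum, sum_add_distrib, sum_ite_eq', mem_univ, if_true, ← hCdef]
    linarith
  refine ⟨ε, hε, inv_le_one_of_one_le₀ (by linarith), μ,
    fun h => mul_nonneg hε.le (add_nonneg (hγ0 h) (by split_ifs <;> norm_num)),
    fun h hh => ?_, fun x z => ?_⟩
  · by_cases hid : h = id
    · exact hid ▸ monotone_id
    · exact (hγ h fun h0 => hh (by simp [μ, hid, h0])).1
  rcases eq_or_ne x z with rfl | hxz
  · refine apply_eq_of_sum_eq_of_forall_ne ?_ fun z hz => hoff x z hz.symm
    simp [hrow, sum_add_distrib, ← mul_sum, hM1, pointMass]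
  · exact hoff x z hxz

end MonotoneRepresentation

theorem ctsTime_monotonicity_equiv_iff_weak_monotonicity_equiv_general
    (S : Type) [PartialOrder S] [Fintype S] [DecidableEq S] :
    (∀ L : Matrix S S ℝ, IsGenerator L → SemigroupStochMono L → MonotoneRep L)
      ↔ (∀ P : S → S → ℝ, IsMeasureSystem P 1 →
          (∃ θ : ℝ, 0 < θ ∧ θ ≤ 1 ∧
            StochMonoSystem (fun x z => θ * P x z + (1 - θ) * pointMass x z)) →
          (∃ θ : ℝ, 0 < θ ∧ θ ≤ 1 ∧
            RealizablyMono (fun x z => θ * P x z + (1 - θ) * pointMass x z))) := by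
  constructor
  · rintro hcts P hP ⟨θ, hθ0, hθ1, hmono⟩
    have hM := hP.mix_pointMass hθ0.le hθ1
    obtain ⟨ε, hε0, hε1, hreal⟩ := (hcts _ (isGenerator_sub_one hM.1 hM.2)
      (semigroupStochMono_sub_one hmono hM.1)).exists_realizablyMono hM.2
    refine ⟨ε * θ, mul_pos hε0 hθ0, mul_le_one₀ hε1 hθ0.le hθ1, ?_⟩
    convert hreal using 3 with x z
    ring
  · intro hweak L hL hmono
    refine monotoneRep_of_tendsto (Ln := fun n : ℕ => (n : ℝ) • transP L (n : ℝ)⁻¹)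
      (fun n => ?_) fun x z hxz => ?_
    · have ht : 0 ≤ (n : ℝ)⁻¹ := by positivity
      obtain ⟨θ, hθ0, -, hreal⟩ := hweak (transP L (n : ℝ)⁻¹)
        ⟨hL.transP_nonneg ht, sum_transP_apply hL.2 _⟩
        ⟨1, one_pos, le_rfl, fun x y hxy => by simpa using hmono _ ht x y hxy⟩
      exact (hreal.monotoneRep hθ0).smul n.cast_nonneg
    · simpa [Function.comp_def] using (tendsto_inv_mul_transP_apply L hxz).comp
        (tendsto_inv_atTop_nhdsGT_zero.comp tendsto_natCast_atTop_atTop)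

/-- Monotonicity equivalence for continuous-time Markov
processes on `S` holds iff weak monotonicity equivalence holds for
discrete-time Markov chains on `S`. -/
theorem ctsTime_monotonicity_equiv_iff_weak_monotonicity_equiv
    (S : Type) [PartialOrder S] [Fintype S] [DecidableEq S]
    (hconn : PosetConnected S) :
    (∀ L : Matrix S S ℝ, IsGenerator L → SemigroupStochMono L → MonotoneRep L)
      ↔ (∀ P : S → S → ℝ, IsMeasureSystem P 1 →
          (∃ θ : ℝ, 0 < θ ∧ θ ≤ 1 ∧
            StochMonoSystem (fun x z => θ * P x z + (1 - θ) * pointMass x z)) →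
          (∃ θ : ℝ, 0 < θ ∧ θ ≤ 1 ∧
            RealizablyMono (fun x z => θ * P x z + (1 - θ) * pointMass x z))) :=
  ctsTime_monotonicity_equiv_iff_weak_monotonicity_equiv_general S
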